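/- The map p : ℍ∖{0} → Im ℍ∖{0}, p(x) = x i x*, is surjective, and p(x) = p(y) if and only if y = x e^{iα} for some α ∈ ℝ; i.e., the fibers of p are exactly the orbits of the right U(1)-action x ↦ x e^{iα}. -/

import Mathlib

/-!
Write `p x = x i x*`. Then `p (x u) = x (p u) x*`, so for `x ≠ 0` the equation `p x = p y` says
that `u = x⁻¹ y` satisfies `p u = i`. Taking norms gives `|u| = 1`, hence `u* = u⁻¹` and `u`
commutes with `i`; so `u` lies in `ℂ = ℝ + ℝ i` and is some `e^{iα}`.
For surjectivity, a pure quaternion `z` of norm `n` is the image of a real multiple of `z + n i`,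
except `z = -n i`, which is the image of `√n j`.
-/

/-- The imaginary unit `i` in the quaternions. -/
noncomputable def qi : Quaternion ℝ := ⟨0, 1, 0, 0⟩

/-- The unit complex number `e^{iα} = cos α + i sin α` inside the quaternions. -/
noncomputable def expi (α : ℝ) : Quaternion ℝ := ⟨Real.cos α, Real.sin α, 0, 0⟩

@[simp] theorem qi_re : qi.re = 0 := rfl
@[simp] theorem qi_imI : qi.imI = 1 := rfl
@[simp] theorem qi_imJ : qi.imJ = 0 := rfl
@[simp] theorem qi_imK : qi.imK = 0 := rfl

noncomputable def hopfMap (x : Quaternion ℝ) : Quaternion ℝ := x * qi * star x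

theorem hopfMap_eq (x : Quaternion ℝ) :
    hopfMap x = ⟨0, x.re ^ 2 + x.imI ^ 2 - x.imJ ^ 2 - x.imK ^ 2,
      2 * (x.imI * x.imJ + x.re * x.imK), 2 * (x.imI * x.imK - x.re * x.imJ)⟩ := by
  ext <;> simp [hopfMap, Quaternion.re_mul, Quaternion.imI_mul, Quaternion.imJ_mul,
    Quaternion.imK_mul] <;> ring

theorem hopfMap_mul (x u : Quaternion ℝ) : hopfMap (x * u) = x * hopfMap u * star x := by
  simp only [hopfMap, star_mul, mul_assoc]

theorem hopfMap_expi (α : ℝ) : hopfMap (expi α) = qi := by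
  rw [hopfMap_eq]
  ext <;> simp [expi]

theorem Real.exists_cos_sin_of_sq_add_sq_eq_one {a b : ℝ} (h : a ^ 2 + b ^ 2 = 1) :
    ∃ α, Real.cos α = a ∧ Real.sin α = b := by
  have hw : ‖(⟨a, b⟩ : ℂ)‖ = 1 := by
    rw [Complex.norm_def, Real.sqrt_eq_one, Complex.normSq_apply]
    linear_combination h
  refine ⟨Complex.arg ⟨a, b⟩, ?_, ?_⟩
  · rw [Complex.cos_arg (norm_ne_zero_iff.mp (hw.trans_ne one_ne_zero)), hw, div_one]
  · rw [Complex.sin_arg, hw, div_one]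

theorem normSq_eq_one_of_hopfMap_eq_qi {u : Quaternion ℝ} (h : hopfMap u = qi) :
    Quaternion.normSq u = 1 := by
  have h2 := congrArg Quaternion.normSq h
  have hqi : Quaternion.normSq qi = 1 := by simp [Quaternion.normSq_def']
  simp only [hopfMap, map_mul, Quaternion.normSq_star, hqi] at h2
  nlinarith [Quaternion.normSq_nonneg (a := u)]

theorem mul_qi_comm_of_hopfMap_eq_qi {u : Quaternion ℝ} (h : hopfMap u = qi) :
    u * qi = qi * u := by
  calc u * qi = u * qi * (star u * u) := by
        rw [Quaternion.star_mul_self, normSq_eq_one_of_hopfMap_eq_qi h]; simp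
    _ = qi * u := by rw [← mul_assoc, ← hopfMap, h]

theorem exists_eq_expi_of_hopfMap_eq_qi {u : Quaternion ℝ} (h : hopfMap u = qi) :
    ∃ α, u = expi α := by
  have hcomm := mul_qi_comm_of_hopfMap_eq_qi h
  have hJ : u.imJ = 0 := by
    have := congrArg QuaternionAlgebra.imK hcomm
    simp [Quaternion.imK_mul] at this
    linarith
  have hK : u.imK = 0 := by
    have := congrArg QuaternionAlgebra.imJ hcomm
    simp [Quaternion.imJ_mul] at this
    linarith
  have hn := normSq_eq_one_of_hopfMap_eq_qi h
  rw [Quaternion.normSq_def', hJ, hK] at hn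
  obtain ⟨α, hcos, hsin⟩ :=
    Real.exists_cos_sin_of_sq_add_sq_eq_one (a := u.re) (b := u.imI) (by linear_combination hn)
  exact ⟨α, by ext <;> simp [expi, hcos, hsin, hJ, hK]⟩

theorem exists_hopfMap_eq {z : Quaternion ℝ} (hz : z.re = 0) : ∃ x, hopfMap x = z := by
  set n := √(z.imI ^ 2 + z.imJ ^ 2 + z.imK ^ 2)
  have hn : n ^ 2 = z.imI ^ 2 + z.imJ ^ 2 + z.imK ^ 2 := Real.sq_sqrt (by positivity)
  have hn0 : 0 ≤ n := Real.sqrt_nonneg _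
  have hbc : z.imJ ^ 2 + z.imK ^ 2 = (n - z.imI) * (n + z.imI) := by linear_combination -hn
  have hna : -n ≤ z.imI := by nlinarith [sq_nonneg z.imJ, sq_nonneg z.imK]
  rcases hna.eq_or_lt with hna | hna
  · have hJ : z.imJ = 0 := by nlinarith [sq_nonneg z.imJ, sq_nonneg z.imK]
    have hK : z.imK = 0 := by nlinarith [sq_nonneg z.imJ, sq_nonneg z.imK]
    refine ⟨⟨0, 0, √n, 0⟩, (hopfMap_eq _).trans ?_⟩
    ext <;> simp [hz, hJ, hK, ← hna, Real.sq_sqrt hn0]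
  · -- up to a real factor this is `z + n i`, whose image is `2 (n + z.imI) z`
    set p := √((n + z.imI) / 2)
    have hp : p ^ 2 = (n + z.imI) / 2 := Real.sq_sqrt (by linarith)
    have hp0 : 0 < p := Real.sqrt_pos.mpr (by linarith)
    refine ⟨⟨0, p, z.imJ / (2 * p), z.imK / (2 * p)⟩, (hopfMap_eq _).trans ?_⟩
    ext
    · exact hz.symm
    · field_simp
      linear_combination (4 * p ^ 2 + 2 * n - 2 * z.imI) * hp - hbc
    all_goals field_simp; ring

theorem hopfMap_eq_hopfMap_iff {x y : Quaternion ℝ} (hx : x ≠ 0) :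
    hopfMap x = hopfMap y ↔ ∃ α, y = x * expi α := by
  constructor
  · intro h
    have hu : hopfMap (x⁻¹ * y) = qi := by
      apply mul_left_cancel₀ hx
      apply mul_right_cancel₀ (star_ne_zero.mpr hx)
      rw [← hopfMap_mul, mul_inv_cancel_left₀ hx, ← h, hopfMap]
    obtain ⟨α, hα⟩ := exists_eq_expi_of_hopfMap_eq_qi hu
    exact ⟨α, by rw [← hα, mul_inv_cancel_left₀ hx]⟩
  · rintro ⟨α, rfl⟩
    rw [hopfMap_mul, hopfMap_expi, hopfMap]

/-- The map `p : ℍ∖{0} → Im ℍ∖{0}`, `p(x) = x i x*`, is surjective, and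
`p(x) = p(y)` if and only if `y = x e^{iα}` for some `α ∈ ℝ`. -/
theorem stmt7 :
    (∀ z : Quaternion ℝ, z.re = 0 → z ≠ 0 →
      ∃ x : Quaternion ℝ, x ≠ 0 ∧ x * qi * star x = z) ∧
    (∀ x y : Quaternion ℝ, x ≠ 0 → y ≠ 0 →
      (x * qi * star x =
          y * qi * star y ↔
        ∃ α : ℝ, y = x * expi α)) := by
  refine ⟨fun z hre hz => ?_, fun x y hx _ => hopfMap_eq_hopfMap_iff hx⟩
  obtain ⟨x, hx⟩ := exists_hopfMap_eq hre
  refine ⟨x, ?_, hx⟩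
  rintro rfl
  exact hz (by simp [← hx, hopfMap])
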